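/- Let M be a matroid with rank function r on a finite ground set 𝒳, ≻ a strict linear order on 𝒳, q a natural number, and G ⊆ 𝒳 with |G| ≤ q. Every choice rule C on 𝒳 satisfying guaranteed enrollment (A ∩ G ⊆ C(A) for all A), maximal utilization of reservations (for all A and x ∈ A \ C(A): if |C(A)| < q then r(C(A) ∪ {x}) = r(C(A)), and if |C(A)| = q then for every y ∈ C(A) \ G, r((C(A) \ {y}) ∪ {x}) ≤ r(C(A))), no justified envy under reserves (for all A, x ∈ C(A) \ G, y ∈ A \ C(A): y ≻ x implies r((C(A) \ {x}) ∪ {y}) < r(C(A))), and non-wastefulness (|C(A)| = min(|A|, q) for all A) satisfies path independence and size monotonicity. -/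

import Mathlib

/-!
A choice satisfying the four axioms at a menu `A` is unique. Maximal utilization forces it to have
maximal rank among the sets of size `min |A| q` containing `A ∩ G`, and no justified envy forces it
to be the best of those in the lexicographic order induced by the priorities. The greedy rule
(take `A ∩ G`; scan the other contracts by priority, keeping those that raise the rank while
capacity remains; fill up with the highest remaining contracts) satisfies the axioms, so it is the
choice. The greedy rule is substitutable: on a smaller menu a contract is spanned by fewer
higher-priority contracts, the rank cap `r(A ∩ G) + q - |A ∩ G|` is larger, and fewer contracts
precede it in the filling step. Substitutability and uniqueness give path independence, and size
monotonicity is non-wastefulness.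
-/

/-- A matroid on the finite ground set `α`, given by its independent sets. -/
structure FinMatroid (α : Type*) [DecidableEq α] where
  Indep : Finset α → Prop
  indep_empty : Indep ∅
  indep_subset : ∀ ⦃A B : Finset α⦄, Indep B → A ⊆ B → Indep A
  indep_exchange : ∀ ⦃A B : Finset α⦄, Indep A → Indep B → A.card < B.card →
    ∃ x ∈ B, x ∉ A ∧ Indep (insert x A)

open Classical in
/-- The rank of a set: the common cardinality of its maximal independent
subsets. -/
noncomputable def FinMatroid.rank {α : Type*} [DecidableEq α]
    (M : FinMatroid α) (X : Finset α) : ℕ :=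
  (X.powerset.filter fun A => M.Indep A).sup Finset.card

/-- `Y` is a basis of `X`: a maximal independent subset of `X`. -/
def FinMatroid.IsBasisOf {α : Type*} [DecidableEq α]
    (M : FinMatroid α) (Y X : Finset α) : Prop :=
  Y ⊆ X ∧ M.Indep Y ∧ ∀ Z : Finset α, Z ⊆ X → M.Indep Z → Y ⊆ Z → Z = Y

namespace Finset

variable {α : Type*} [LinearOrder α]

lemma filter_lt_insert_of_lt {a x : α} {W : Finset α} (hax : a < x) :
    (insert a W).filter (x < ·) = W.filter (x < ·) := by
  rw [filter_insert, if_neg (lt_asymm hax)]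

lemma filter_lt_insert_self {a : α} {W : Finset α} (ha : ∀ x ∈ W, a < x) :
    (insert a W).filter (a < ·) = W := by
  rw [filter_insert, if_neg (lt_irrefl a), filter_true_of_mem ha]

def highest (m : ℕ) (R : Finset α) : Finset α :=
  R.filter fun x => (R.filter (x < ·)).card < m

lemma highest_subset (m : ℕ) (R : Finset α) : highest m R ⊆ R :=
  filter_subset _ _

lemma highest_zero (R : Finset α) : highest 0 R = ∅ := by
  simp [highest]

lemma highest_insert {m : ℕ} {a : α} {R : Finset α} (ha : ∀ x ∈ R, a < x) :
    highest m (insert a R) = if R.card < m then insert a (highest m R) else highest m R := by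
  rw [highest, filter_insert, filter_lt_insert_self ha, highest,
    filter_congr fun x hx => by rw [filter_lt_insert_of_lt (ha x hx)]]

lemma card_highest (m : ℕ) (R : Finset α) : (highest m R).card = min R.card m := by
  induction R using induction_on_min with
  | empty => simp [highest]
  | insert a R ha ih =>
    have haR : a ∉ R := fun h => lt_irrefl a (ha a h)
    rw [highest_insert ha, card_insert_of_notMem haR]
    split_ifs with hR
    · rw [card_insert_of_notMem fun h => haR (highest_subset m R h)]
      omega
    · omega

lemma lt_of_mem_highest {m : ℕ} {R : Finset α} {x y : α} (hx : x ∈ highest m R) (hy : y ∈ R)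
    (hy' : y ∉ highest m R) : y < x := by
  simp only [highest, mem_filter, not_and, not_lt] at hx hy'
  refine lt_of_not_ge fun hxy => ?_
  rcases hxy.lt_or_eq with hxy | rfl
  · have hss : R.filter (y < ·) ⊂ R.filter (x < ·) :=
      ssubset_iff_of_subset (monotone_filter_right R fun z _ => hxy.trans)
        |>.2 ⟨y, mem_filter.2 ⟨hy, hxy⟩, by simp⟩
    have := card_lt_card hss
    have := hy' hy
    omega
  · exact absurd hx.2 (not_lt.2 (hy' hy))

end Finset

namespace FinMatroid

section Rank

variable {α : Type*} [DecidableEq α]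

def toMatroid (M : FinMatroid α) : Matroid α :=
  (IndepMatroid.ofFinset Set.univ M.Indep M.indep_empty M.indep_subset M.indep_exchange
    fun _ _ => Set.subset_univ _).matroid

variable {M : FinMatroid α}

lemma toMatroid_indep_coe {I : Finset α} : M.toMatroid.Indep I ↔ M.Indep I := by
  simp [toMatroid]

open Classical in
lemma cast_rank (X : Finset α) : (M.rank X : ℕ∞) = M.toMatroid.eRk X := by
  apply le_antisymm
  · obtain ⟨I, hI, hsup⟩ := Finset.exists_mem_eq_sup
      (X.powerset.filter fun A => M.Indep A) ⟨∅, by simp [M.indep_empty]⟩ Finset.card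
    simp only [Finset.mem_filter, Finset.mem_powerset] at hI
    rw [rank, hsup, ← Set.encard_coe_eq_coe_finsetCard]
    exact (toMatroid_indep_coe.2 hI.2).encard_le_eRk_of_subset (Finset.coe_subset.2 hI.1)
  · refine Matroid.eRk_le_iff.2 fun I hIX hI => ?_
    obtain ⟨J, rfl⟩ := (X.finite_toSet.subset hIX).exists_finset_coe
    rw [Set.encard_coe_eq_coe_finsetCard, Nat.cast_le]
    exact Finset.le_sup (Finset.mem_filter.2
      ⟨Finset.mem_powerset.2 (Finset.coe_subset.1 hIX), toMatroid_indep_coe.1 hI⟩)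

lemma rank_mono {X Y : Finset α} (h : X ⊆ Y) : M.rank X ≤ M.rank Y := by
  have := M.toMatroid.eRk_mono (Finset.coe_subset.2 h)
  rwa [← cast_rank, ← cast_rank, Nat.cast_le] at this

lemma rank_insert_le (x : α) (X : Finset α) : M.rank (insert x X) ≤ M.rank X + 1 := by
  have := M.toMatroid.eRk_insert_le_add_one x X
  rw [← Finset.coe_insert, ← cast_rank, ← cast_rank] at this
  exact_mod_cast this

lemma rank_union_le_add_card (X Y : Finset α) : M.rank (X ∪ Y) ≤ M.rank X + Y.card := by
  have := M.toMatroid.eRk_union_le_eRk_add_encard X Y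
  rw [← Finset.coe_union, ← cast_rank, ← cast_rank, Set.encard_coe_eq_coe_finsetCard] at this
  exact_mod_cast this

lemma rank_inter_add_rank_union_le (X Y : Finset α) :
    M.rank (X ∩ Y) + M.rank (X ∪ Y) ≤ M.rank X + M.rank Y := by
  have := M.toMatroid.eRk_inter_add_eRk_union_le X Y
  rw [← Finset.coe_inter, ← Finset.coe_union, ← cast_rank, ← cast_rank, ← cast_rank,
    ← cast_rank] at this
  exact_mod_cast this

lemma exists_rank_insert_gt {X Y : Finset α} (h : M.rank X < M.rank Y) :
    ∃ y ∈ Y, M.rank X < M.rank (insert y X) := by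
  have h' : M.toMatroid.eRk X < M.toMatroid.eRk Y := by
    rw [← cast_rank, ← cast_rank]; exact_mod_cast h
  obtain ⟨y, hy, hrk⟩ := Matroid.exists_eRk_insert_eq_add_one_of_lt h'
  refine ⟨y, hy.1, ?_⟩
  rw [← Finset.coe_insert, ← cast_rank, ← cast_rank] at hrk
  have : M.rank (insert y X) = M.rank X + 1 := by exact_mod_cast hrk
  omega

lemma rank_le_rank_add_card_sdiff {X Y : Finset α} (h : X ⊆ Y) :
    M.rank Y ≤ M.rank X + (Y \ X).card := by
  simpa [Finset.union_sdiff_of_subset h] using rank_union_le_add_card (M := M) X (Y \ X)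

lemma card_add_rank_le_of_subset {X Y : Finset α} (h : X ⊆ Y) :
    X.card + M.rank Y ≤ Y.card + M.rank X := by
  have := rank_le_rank_add_card_sdiff (M := M) h
  have := Finset.card_sdiff_add_card_eq_card h
  omega

lemma rank_union_le_of_subset {X Y Z : Finset α} (hXY : X ⊆ Y) (hXZ : X ⊆ Z)
    (h : M.rank Y ≤ M.rank X) : M.rank (Z ∪ Y) ≤ M.rank Z := by
  have := rank_inter_add_rank_union_le (M := M) Z Y
  have := rank_mono (M := M) (Finset.subset_inter hXZ hXY)
  omega

lemma rank_insert_le_of_subset {x : α} {X Z : Finset α} (hXZ : X ⊆ Z)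
    (h : M.rank (insert x X) ≤ M.rank X) : M.rank (insert x Z) ≤ M.rank Z :=
  (rank_mono (Finset.insert_subset (Finset.mem_union_right Z (Finset.mem_insert_self x X))
    Finset.subset_union_left)).trans (rank_union_le_of_subset (Finset.subset_insert x X) hXZ h)

lemma rank_erase_lt_of_subset {a : α} {Y Z : Finset α} (ha : a ∈ Y) (hYZ : Y ⊆ Z)
    (h : M.rank (Z.erase a) < M.rank Z) : M.rank (Y.erase a) < M.rank Y := by
  by_contra! hY
  rw [← Finset.insert_erase ha, Finset.erase_insert (Finset.notMem_erase a Y)] at hY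
  have := rank_insert_le_of_subset (Finset.erase_subset_erase a hYZ) hY
  rw [Finset.insert_erase (hYZ ha)] at this
  omega

lemma rank_sdiff_add_card_le {E Z : Finset α} (hEZ : E ⊆ Z)
    (h : ∀ e ∈ E, M.rank (Z.erase e) < M.rank Z) : M.rank (Z \ E) + E.card ≤ M.rank Z := by
  induction E using Finset.induction_on with
  | empty => simp
  | insert a E ha ih =>
    have haZ : a ∈ Z \ E := Finset.mem_sdiff.2 ⟨hEZ (Finset.mem_insert_self a E), ha⟩
    have hlt := rank_erase_lt_of_subset haZ Finset.sdiff_subset (h a (Finset.mem_insert_self a E))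
    have := ih ((Finset.subset_insert a E).trans hEZ) fun e he => h e (Finset.mem_insert_of_mem he)
    rw [Finset.sdiff_insert, Finset.card_insert_of_notMem ha]
    omega

end Rank

section ReserveChoice

variable {α : Type*} [LinearOrder α]

structure IsReserveChoice (M : FinMatroid α) (q : ℕ) (G A S : Finset α) : Prop where
  subset : S ⊆ A
  inter_subset : A ∩ G ⊆ S
  card_eq : S.card = min A.card q
  maximal_utilization : ∀ x ∈ A \ S,
    (S.card < q → M.rank (insert x S) = M.rank S) ∧
    (S.card = q → ∀ y ∈ S \ G, M.rank (insert x (S.erase y)) ≤ M.rank S)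
  no_justified_envy : ∀ x ∈ S \ G, ∀ y ∈ A \ S, y > x →
    M.rank (insert y (S.erase x)) < M.rank S

namespace IsReserveChoice

variable {M : FinMatroid α} {q : ℕ} {G A S S' : Finset α}

lemma eq_of_card_le (h : IsReserveChoice M q G A S) (hA : A.card ≤ q) : S = A :=
  Finset.eq_of_subset_of_card_le h.subset (by rw [h.card_eq]; omega)

lemma inter_eq (h : IsReserveChoice M q G A S) : S ∩ G = A ∩ G :=
  (Finset.inter_subset_inter_right h.subset).antisymm
    (Finset.subset_inter h.inter_subset Finset.inter_subset_right)

lemma rank_le (h : IsReserveChoice M q G A S) (hS' : S' ⊆ A) (hG' : A ∩ G ⊆ S')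
    (hc' : S'.card = min A.card q) : M.rank S' ≤ M.rank S := by
  by_cases hA : A.card ≤ q
  · rw [h.eq_of_card_le hA]
    exact rank_mono hS'
  have hS : S.card = q := by rw [h.card_eq]; omega
  by_contra! hlt
  obtain ⟨x, hxS', hx⟩ := exists_rank_insert_gt hlt
  have hxS : x ∉ S := fun hxS => by rw [Finset.insert_eq_of_mem hxS] at hx; omega
  -- `x` raises the rank of `S`, so maximal utilization makes every `y ∈ S \ G` a coloop of `S`.
  have hcoloop : ∀ y ∈ S \ G, M.rank (S.erase y) < M.rank S := by
    intro y hy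
    have hMU := (h.maximal_utilization x (Finset.mem_sdiff.2 ⟨hS' hxS', hxS⟩)).2 hS y hy
    have hsub := rank_inter_add_rank_union_le (M := M) (insert x (S.erase y)) S
    rw [Finset.insert_inter_of_notMem hxS, Finset.inter_eq_left.2 (Finset.erase_subset y S),
      Finset.insert_union, Finset.union_eq_right.2 (Finset.erase_subset y S)] at hsub
    omega
  have hpeel := rank_sdiff_add_card_le Finset.sdiff_subset hcoloop
  rw [Finset.sdiff_sdiff_self_left, h.inter_eq] at hpeel
  have hS'le := rank_le_rank_add_card_sdiff (M := M) hG'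
  have := Finset.card_sdiff_add_card_eq_card hG'
  have := Finset.card_sdiff_add_card_inter S G
  rw [h.inter_eq] at this
  omega

lemma mem_of_agree_above (h : IsReserveChoice M q G A S) (hS' : S' ⊆ A) (hG' : A ∩ G ⊆ S')
    (hc' : S'.card = min A.card q) (hrank : M.rank S ≤ M.rank S') {d : α} (hd : d ∈ S')
    (hagree : ∀ z, d < z → (z ∈ S ↔ z ∈ S')) : d ∈ S := by
  by_contra hdS
  by_cases hA : A.card ≤ q
  · exact hdS (h.eq_of_card_le hA ▸ hS' hd)
  have hS : S.card = q := by rw [h.card_eq]; omega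
  have hdA : d ∈ A \ S := Finset.mem_sdiff.2 ⟨hS' hd, hdS⟩
  -- `d` envies every `s ∈ D`, so each of them is a coloop of `S + d`; peeling `D` off `S + d`
  -- leaves a subset of `S'` whose rank is too small to reach `r S'`.
  set D := (S \ G).filter (· < d)
  have hDS : D ⊆ S := (Finset.filter_subset _ _).trans Finset.sdiff_subset
  have hSD : S \ D ⊆ S' := by
    intro s hs
    obtain ⟨hsS, hsD⟩ := Finset.mem_sdiff.1 hs
    by_cases hsG : s ∈ G
    · exact hG' (Finset.mem_inter.2 ⟨h.subset hsS, hsG⟩)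
    refine (hagree s (lt_of_le_of_ne (not_lt.1 fun hsd => hsD ?_) ?_)).1 hsS
    · exact Finset.mem_filter.2 ⟨Finset.mem_sdiff.2 ⟨hsS, hsG⟩, hsd⟩
    · rintro rfl; exact hdS hsS
  obtain ⟨s₀, hs₀⟩ : D.Nonempty := by
    by_contra! hD
    rw [hD, Finset.sdiff_empty] at hSD
    exact hdS (Finset.eq_of_subset_of_card_le hSD (by omega) ▸ hd)
  have hnje : ∀ s ∈ D, M.rank (insert d (S.erase s)) < M.rank S := fun s hs =>
    h.no_justified_envy s (Finset.mem_filter.1 hs).1 d hdA (Finset.mem_filter.1 hs).2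
  have hdS_rank : M.rank (insert d S) ≤ M.rank S := by
    have := rank_insert_le (M := M) s₀ (insert d (S.erase s₀))
    rw [Finset.insert_comm, Finset.insert_erase (hDS hs₀)] at this
    have := hnje s₀ hs₀
    omega
  have hcoloop : ∀ s ∈ D, M.rank ((insert d S).erase s) < M.rank (insert d S) := by
    intro s hs
    rw [Finset.erase_insert_of_ne (by rintro rfl; exact hdS (hDS hs))]
    exact (hnje s hs).trans_le (rank_mono (Finset.subset_insert d S))
  have hpeel := rank_sdiff_add_card_le (hDS.trans (Finset.subset_insert d S)) hcoloop
  rw [Finset.insert_sdiff_of_notMem _ (fun hdD => hdS (hDS hdD))] at hpeel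
  have hW : insert d (S \ D) ⊆ S' := Finset.insert_subset hd hSD
  have hS'le := rank_le_rank_add_card_sdiff (M := M) hW
  have := Finset.card_sdiff_add_card_eq_card hW
  have := Finset.card_sdiff_add_card_eq_card hDS
  rw [Finset.card_insert_of_notMem (fun hdSD => hdS (Finset.mem_sdiff.1 hdSD).1)] at *
  have := Finset.card_pos.2 ⟨s₀, hs₀⟩
  omega

lemma unique {S₁ S₂ : Finset α} (h₁ : IsReserveChoice M q G A S₁)
    (h₂ : IsReserveChoice M q G A S₂) : S₁ = S₂ := by
  by_contra hne
  have hΔ : (symmDiff S₁ S₂).Nonempty :=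
    Finset.nonempty_iff_ne_empty.2 fun h => hne (symmDiff_eq_bot.1 h)
  set d := (symmDiff S₁ S₂).max' hΔ
  have hagree : ∀ z, d < z → (z ∈ S₁ ↔ z ∈ S₂) := by
    intro z hz
    by_contra hz'
    refine not_le.2 hz (Finset.le_max' _ z (Finset.mem_symmDiff.2 ?_))
    tauto
  rcases Finset.mem_symmDiff.1 (Finset.max'_mem _ hΔ) with ⟨hd₁, hd₂⟩ | ⟨hd₂, hd₁⟩
  · exact hd₂ (h₂.mem_of_agree_above h₁.subset h₁.inter_subset h₁.card_eq
      (h₁.rank_le h₂.subset h₂.inter_subset h₂.card_eq) hd₁ fun z hz => (hagree z hz).symm)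
  · exact hd₁ (h₁.mem_of_agree_above h₂.subset h₂.inter_subset h₂.card_eq
      (h₂.rank_le h₁.subset h₁.inter_subset h₁.card_eq) hd₂ hagree)

lemma of_subset {Y Z : Finset α} (h : IsReserveChoice M q G Y S) (hSZ : S ⊆ Z) (hZY : Z ⊆ Y) :
    IsReserveChoice M q G Z S where
  subset := hSZ
  inter_subset := (Finset.inter_subset_inter_right hZY).trans h.inter_subset
  card_eq := by
    have := h.card_eq
    have := Finset.card_le_card hSZ
    have := Finset.card_le_card hZY
    omega
  maximal_utilization x hx :=
    h.maximal_utilization x (Finset.sdiff_subset_sdiff hZY le_rfl hx)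
  no_justified_envy x hx y hy :=
    h.no_justified_envy x hx y (Finset.sdiff_subset_sdiff hZY le_rfl hy)

end IsReserveChoice

end ReserveChoice

section Greedy

variable {α : Type*} [LinearOrder α] (M : FinMatroid α)

/-- The closed form of scanning `W` from the top, starting from `B`, and keeping an element when it
raises the rank of what precedes it without pushing that rank above `c`. -/
noncomputable def greedy (B : Finset α) (c : ℕ) (W : Finset α) : Finset α :=
  W.filter fun x => M.rank (B ∪ W.filter (x < ·)) < M.rank (insert x (B ∪ W.filter (x < ·))) ∧
    M.rank (insert x (B ∪ W.filter (x < ·))) ≤ c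

variable {M} {B W : Finset α} {c : ℕ}

lemma greedy_subset : M.greedy B c W ⊆ W :=
  Finset.filter_subset _ _

lemma greedy_insert {a : α} (ha : ∀ x ∈ W, a < x) :
    M.greedy B c (insert a W) =
      if M.rank (B ∪ W) < M.rank (insert a (B ∪ W)) ∧ M.rank (insert a (B ∪ W)) ≤ c
      then insert a (M.greedy B c W) else M.greedy B c W := by
  rw [greedy, Finset.filter_insert, Finset.filter_lt_insert_self ha, greedy,
    Finset.filter_congr fun x hx => by rw [Finset.filter_lt_insert_of_lt (ha x hx)]]

lemma filter_greedy (t : α) :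
    (M.greedy B c W).filter (t < ·) = M.greedy B c (W.filter (t < ·)) := by
  ext x
  simp only [greedy, Finset.mem_filter]
  by_cases htx : t < x
  · have : (W.filter (t < ·)).filter (x < ·) = W.filter (x < ·) := by
      rw [Finset.filter_filter]
      exact Finset.filter_congr fun y _ => ⟨fun h => h.2, fun h => ⟨htx.trans h, h⟩⟩
    rw [this]
    tauto
  · tauto

lemma rank_union_greedy : M.rank (B ∪ M.greedy B c W) = M.rank B + (M.greedy B c W).card := by
  induction W using Finset.induction_on_min with
  | empty => simp [greedy]
  | insert a W ha ih =>
    rw [greedy_insert ha]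
    split_ifs with hpick
    · have haW : a ∉ M.greedy B c W := fun h => lt_irrefl a (ha a (greedy_subset h))
      have hraise : M.rank (B ∪ M.greedy B c W) < M.rank (insert a (B ∪ M.greedy B c W)) := by
        by_contra! h
        have := rank_insert_le_of_subset (Finset.union_subset_union_right greedy_subset) h
        omega
      have := rank_insert_le (M := M) a (B ∪ M.greedy B c W)
      rw [Finset.union_insert, Finset.card_insert_of_notMem haW]
      omega
    · exact ih

lemma rank_add_card_greedy (hc : M.rank B ≤ c) :
    M.rank B + (M.greedy B c W).card = min (M.rank (B ∪ W)) c := by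
  induction W using Finset.induction_on_min with
  | empty => simp [greedy, hc]
  | insert a W ha ih =>
    have haW : a ∉ M.greedy B c W := fun h => lt_irrefl a (ha a (greedy_subset h))
    have := rank_insert_le (M := M) a (B ∪ W)
    have := rank_mono (M := M) (Finset.subset_insert a (B ∪ W))
    rw [greedy_insert ha, Finset.union_insert]
    split_ifs with hpick
    · rw [Finset.card_insert_of_notMem haW]
      omega
    · omega

end Greedy

section GreedyChoice

variable {α : Type*} [LinearOrder α] (M : FinMatroid α) (q : ℕ) (G : Finset α)

/-- A bound on the rank of a set made of `A ∩ G` and `q - (A ∩ G).card` further contracts. -/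
noncomputable def capRank (A : Finset α) : ℕ :=
  M.rank (A ∩ G) + (q - (A ∩ G).card)

noncomputable def picks (A : Finset α) : Finset α :=
  M.greedy (A ∩ G) (M.capRank q G A) (A \ G)

noncomputable def firstPass (A : Finset α) : Finset α :=
  A ∩ G ∪ M.picks q G A

noncomputable def greedyChoice (A : Finset α) : Finset α :=
  M.firstPass q G A ∪ Finset.highest (q - (M.firstPass q G A).card) (A \ M.firstPass q G A)

variable {M q G} {A D : Finset α} {x : α}

lemma rank_inter_le_capRank : M.rank (A ∩ G) ≤ M.capRank q G A :=
  Nat.le_add_right _ _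

lemma mem_picks : x ∈ M.picks q G A ↔ x ∈ A \ G ∧
    M.rank (A ∩ G ∪ (A \ G).filter (x < ·)) <
      M.rank (insert x (A ∩ G ∪ (A \ G).filter (x < ·))) ∧
    M.rank (insert x (A ∩ G ∪ (A \ G).filter (x < ·))) ≤ M.capRank q G A :=
  Finset.mem_filter

lemma picks_subset : M.picks q G A ⊆ A \ G :=
  greedy_subset

lemma rank_add_card_picks :
    M.rank (A ∩ G) + (M.picks q G A).card = min (M.rank A) (M.capRank q G A) := by
  have hA : A ∩ G ∪ A \ G = A := sup_inf_sdiff A G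
  rw [picks, rank_add_card_greedy rank_inter_le_capRank, hA]

lemma rank_add_card_filter_picks (t : α) :
    M.rank (A ∩ G) + ((M.picks q G A).filter (t < ·)).card =
      min (M.rank (A ∩ G ∪ (A \ G).filter (t < ·))) (M.capRank q G A) := by
  rw [picks, filter_greedy, rank_add_card_greedy rank_inter_le_capRank]

lemma rank_union_filter_picks (t : α) :
    M.rank (A ∩ G ∪ (M.picks q G A).filter (t < ·)) =
      M.rank (A ∩ G) + ((M.picks q G A).filter (t < ·)).card := by
  rw [picks, filter_greedy, rank_union_greedy]

lemma rank_firstPass : M.rank (M.firstPass q G A) = M.rank (A ∩ G) + (M.picks q G A).card :=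
  rank_union_greedy

lemma card_firstPass : (M.firstPass q G A).card = (A ∩ G).card + (M.picks q G A).card :=
  Finset.card_union_of_disjoint ((Finset.disjoint_sdiff_inter A G).symm.mono_right picks_subset)

lemma card_firstPass_le (hG : G.card ≤ q) : (M.firstPass q G A).card ≤ q := by
  have := rank_add_card_picks (M := M) (q := q) (G := G) (A := A)
  have := Finset.card_le_card (Finset.inter_subset_right : A ∩ G ⊆ G)
  rw [card_firstPass]
  unfold capRank at *
  omega

lemma firstPass_subset : M.firstPass q G A ⊆ A :=
  Finset.union_subset Finset.inter_subset_left (picks_subset.trans Finset.sdiff_subset)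

lemma rank_erase_firstPass_lt {y : α} (hy : y ∈ M.picks q G A) :
    M.rank ((M.firstPass q G A).erase y) < M.rank (M.firstPass q G A) := by
  have hsub : (M.firstPass q G A).erase y ⊆ A ∩ G ∪ (M.picks q G A).erase y := by
    intro z hz
    simp only [firstPass, Finset.mem_erase, Finset.mem_union] at hz ⊢
    tauto
  have := (rank_mono (M := M) hsub).trans (rank_union_le_add_card _ _)
  rw [Finset.card_erase_of_mem hy, rank_firstPass] at *
  have := Finset.card_pos.2 ⟨y, hy⟩
  omega

lemma firstPass_subset_greedyChoice : M.firstPass q G A ⊆ M.greedyChoice q G A :=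
  Finset.subset_union_left

lemma greedyChoice_subset : M.greedyChoice q G A ⊆ A :=
  Finset.union_subset firstPass_subset ((Finset.highest_subset _ _).trans Finset.sdiff_subset)

lemma inter_subset_greedyChoice : A ∩ G ⊆ M.greedyChoice q G A :=
  Finset.subset_union_left.trans firstPass_subset_greedyChoice

lemma card_greedyChoice (hG : G.card ≤ q) : (M.greedyChoice q G A).card = min A.card q := by
  rw [greedyChoice, Finset.card_union_of_disjoint
    (Finset.disjoint_sdiff.mono_right (Finset.highest_subset _ _)), Finset.card_highest]
  have := Finset.card_sdiff_add_card_eq_card (firstPass_subset (M := M) (q := q) (G := G) (A := A))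
  have := card_firstPass_le (M := M) (A := A) hG
  omega

lemma greedyChoice_eq_firstPass (h : (M.firstPass q G A).card = q) :
    M.greedyChoice q G A = M.firstPass q G A := by
  rw [greedyChoice, h, Nat.sub_self, Finset.highest_zero, Finset.union_empty]

lemma greedyChoice_maximal_utilization (hG : G.card ≤ q) (hx : x ∈ A \ M.greedyChoice q G A) :
    ((M.greedyChoice q G A).card < q →
      M.rank (insert x (M.greedyChoice q G A)) = M.rank (M.greedyChoice q G A)) ∧
    ((M.greedyChoice q G A).card = q → ∀ y ∈ M.greedyChoice q G A \ G,
      M.rank (insert x ((M.greedyChoice q G A).erase y)) ≤ M.rank (M.greedyChoice q G A)) := by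
  obtain ⟨hxA, hxC⟩ := Finset.mem_sdiff.1 hx
  refine ⟨fun hlt => absurd ?_ hxC, fun hq y hy => ?_⟩
  · rw [card_greedyChoice hG] at hlt
    rwa [Finset.eq_of_subset_of_card_le greedyChoice_subset
      (by rw [card_greedyChoice hG]; omega)]
  have := rank_add_card_picks (M := M) (q := q) (G := G) (A := A)
  have := rank_firstPass (M := M) (q := q) (G := G) (A := A)
  have := card_firstPass (M := M) (q := q) (G := G) (A := A)
  have := Finset.card_le_card (Finset.inter_subset_right : A ∩ G ⊆ G)
  have hxA_rank := rank_mono (M := M)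
    (Finset.insert_subset hxA (firstPass_subset (M := M) (q := q) (G := G)))
  set P := M.firstPass q G A
  by_cases hspan : M.rank (insert x P) ≤ M.rank P
  · calc M.rank (insert x ((M.greedyChoice q G A).erase y))
        ≤ M.rank (M.greedyChoice q G A ∪ insert x P) :=
          rank_mono (Finset.insert_subset (Finset.mem_union_right _ (Finset.mem_insert_self x P))
            ((Finset.erase_subset y _).trans Finset.subset_union_left))
      _ ≤ M.rank (M.greedyChoice q G A) :=
          rank_union_le_of_subset (Finset.subset_insert x P) firstPass_subset_greedyChoice hspan
  -- `x` still raises the rank of the first pass, so the first pass stopped at capacity.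
  have hPq : P.card = q := by unfold capRank at *; omega
  rw [greedyChoice_eq_firstPass hPq] at hy ⊢
  have hy' : y ∈ M.picks q G A := by
    obtain ⟨hyP, hyG⟩ := Finset.mem_sdiff.1 hy
    exact (Finset.mem_union.1 hyP).resolve_left fun h => hyG (Finset.mem_inter.1 h).2
  have : M.rank (P.erase y) < M.rank P := rank_erase_firstPass_lt hy'
  have := rank_insert_le (M := M) x (P.erase y)
  show M.rank (insert x (P.erase y)) ≤ M.rank P
  omega

lemma greedyChoice_sdiff_firstPass_subset {y : α} (hy : y ∈ A \ M.greedyChoice q G A) :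
    M.greedyChoice q G A \ M.firstPass q G A ⊆ (A \ G).filter (y < ·) := by
  intro z hz
  obtain ⟨hyA, hyC⟩ := Finset.mem_sdiff.1 hy
  obtain ⟨hzC, hzP⟩ := Finset.mem_sdiff.1 hz
  have hzH := (Finset.mem_union.1 hzC).resolve_left hzP
  have hzA := (Finset.mem_sdiff.1 (Finset.highest_subset _ _ hzH)).1
  have hzG : z ∉ G := fun h => hzP (Finset.mem_union_left _ (Finset.mem_inter.2 ⟨hzA, h⟩))
  refine Finset.mem_filter.2 ⟨Finset.mem_sdiff.2 ⟨hzA, hzG⟩, Finset.lt_of_mem_highest hzH ?_ ?_⟩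
  · exact Finset.mem_sdiff.2 ⟨hyA, fun h => hyC (firstPass_subset_greedyChoice h)⟩
  · exact fun h => hyC (Finset.mem_union_right _ h)

lemma greedyChoice_no_justified_envy {y : α} (hx : x ∈ M.greedyChoice q G A \ G)
    (hy : y ∈ A \ M.greedyChoice q G A) (hxy : y > x) :
    M.rank (insert y ((M.greedyChoice q G A).erase x)) < M.rank (M.greedyChoice q G A) := by
  obtain ⟨hxC, hxG⟩ := Finset.mem_sdiff.1 hx
  obtain ⟨hyA, hyC⟩ := Finset.mem_sdiff.1 hy
  have hyG : y ∉ G := fun h => hyC (inter_subset_greedyChoice (Finset.mem_inter.2 ⟨hyA, h⟩))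
  have hfill := greedyChoice_sdiff_firstPass_subset hy
  have hxP : x ∈ M.picks q G A := by
    by_cases hxP : x ∈ M.firstPass q G A
    · exact (Finset.mem_union.1 hxP).resolve_left fun h => hxG (Finset.mem_inter.1 h).2
    · exact absurd (Finset.mem_filter.1 (hfill (Finset.mem_sdiff.2 ⟨hxC, hxP⟩))).2
        (not_lt.2 hxy.le)
  have hcount := rank_add_card_filter_picks (M := M) (q := q) (G := G) (A := A) y
  have hV := rank_union_filter_picks (M := M) (q := q) (G := G) (A := A) y
  have hall := rank_add_card_picks (M := M) (q := q) (G := G) (A := A)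
  have hfewer : ((M.picks q G A).filter (y < ·)).card < (M.picks q G A).card :=
    Finset.card_lt_card (Finset.filter_ssubset.2 ⟨x, hxP, not_lt.2 hxy.le⟩)
  set P := M.firstPass q G A
  set U := A ∩ G ∪ (A \ G).filter (y < ·)
  set V := A ∩ G ∪ (M.picks q G A).filter (y < ·)
  -- `x` is picked below `y`, so capacity was not reached at `y`: `y` was rejected as spanned.
  have hyU : M.rank (insert y U) ≤ M.rank V := by
    have hyP : ¬ (M.rank U < M.rank (insert y U) ∧ M.rank (insert y U) ≤ M.capRank q G A) :=
      fun h => hyC (firstPass_subset_greedyChoice (Finset.mem_union_right _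
        (mem_picks.2 ⟨Finset.mem_sdiff.2 ⟨hyA, hyG⟩, h⟩)))
    have := rank_insert_le (M := M) y U
    omega
  have hVU : V ⊆ insert y U := (Finset.union_subset_union_right
    (Finset.filter_subset_filter _ picks_subset)).trans (Finset.subset_insert y U)
  have hVP : V ⊆ P.erase x := by
    intro z hz
    refine Finset.mem_erase.2 ⟨?_, Finset.union_subset_union_right (Finset.filter_subset _ _) hz⟩
    rintro rfl
    rcases Finset.mem_union.1 hz with hz | hz
    · exact hxG (Finset.mem_inter.1 hz).2
    · exact lt_asymm hxy (Finset.mem_filter.1 hz).2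
  have hsub : insert y ((M.greedyChoice q G A).erase x) ⊆ P.erase x ∪ insert y U := by
    refine Finset.insert_subset (Finset.mem_union_right _ (Finset.mem_insert_self y U)) ?_
    intro z hz
    obtain ⟨hzx, hzC⟩ := Finset.mem_erase.1 hz
    by_cases hzP : z ∈ P
    · exact Finset.mem_union_left _ (Finset.mem_erase.2 ⟨hzx, hzP⟩)
    · exact Finset.mem_union_right _ (Finset.mem_insert_of_mem
        (Finset.mem_union_right _ (hfill (Finset.mem_sdiff.2 ⟨hzC, hzP⟩))))
  calc M.rank (insert y ((M.greedyChoice q G A).erase x))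
      ≤ M.rank (P.erase x ∪ insert y U) := rank_mono hsub
    _ ≤ M.rank (P.erase x) := rank_union_le_of_subset hVU hVP hyU
    _ < M.rank P := rank_erase_firstPass_lt hxP
    _ ≤ M.rank (M.greedyChoice q G A) := rank_mono firstPass_subset_greedyChoice

lemma isReserveChoice_greedyChoice (hG : G.card ≤ q) (A : Finset α) :
    M.IsReserveChoice q G A (M.greedyChoice q G A) where
  subset := greedyChoice_subset
  inter_subset := inter_subset_greedyChoice
  card_eq := card_greedyChoice hG
  maximal_utilization _ hx := greedyChoice_maximal_utilization hG hx
  no_justified_envy _ hx _ hy hxy := greedyChoice_no_justified_envy hx hy hxy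

lemma capRank_le_of_subset (hG : G.card ≤ q) (hAD : A ⊆ D) :
    M.capRank q G D ≤ M.capRank q G A := by
  have hgAD : A ∩ G ⊆ D ∩ G := Finset.inter_subset_inter_right hAD
  have := card_add_rank_le_of_subset (M := M) hgAD
  have := Finset.card_le_card (Finset.inter_subset_right : D ∩ G ⊆ G)
  unfold capRank
  omega

lemma mem_picks_of_subset (hG : G.card ≤ q) (hAD : A ⊆ D) (hxD : x ∈ M.picks q G D)
    (hxA : x ∈ A) : x ∈ M.picks q G A := by
  obtain ⟨hxN, hraise, hcap⟩ := mem_picks.1 hxD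
  have hU : A ∩ G ∪ (A \ G).filter (x < ·) ⊆ D ∩ G ∪ (D \ G).filter (x < ·) :=
    Finset.union_subset_union (Finset.inter_subset_inter_right hAD)
      (Finset.filter_subset_filter _ (Finset.sdiff_subset_sdiff hAD le_rfl))
  refine mem_picks.2 ⟨Finset.mem_sdiff.2 ⟨hxA, (Finset.mem_sdiff.1 hxN).2⟩, ?_, ?_⟩
  · by_contra! h
    have := rank_insert_le_of_subset hU h
    omega
  · exact (rank_mono (Finset.insert_subset_insert x hU)).trans
      (hcap.trans (capRank_le_of_subset hG hAD))

lemma mem_greedyChoice_iff (hG : G.card ≤ q) (hx : x ∈ A \ M.firstPass q G A) :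
    x ∈ M.greedyChoice q G A ↔ (M.firstPass q G A ∪ A.filter (x < ·)).card < q := by
  have hfilter : (A \ M.firstPass q G A).filter (x < ·) = A.filter (x < ·) \ M.firstPass q G A := by
    ext z
    simp only [Finset.mem_filter, Finset.mem_sdiff]
    tauto
  have := Finset.card_sdiff_add_card (A.filter (x < ·)) (M.firstPass q G A)
  have := card_firstPass_le (M := M) (A := A) hG
  rw [greedyChoice, Finset.mem_union, or_iff_right (Finset.mem_sdiff.1 hx).2, Finset.highest,
    Finset.mem_filter, and_iff_right hx, hfilter, Finset.union_comm]
  omega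

lemma card_firstPass_union_filter (t : α) :
    (M.firstPass q G A ∪ A.filter (t < ·)).card + ((M.picks q G A).filter (t < ·)).card =
      (A ∩ G ∪ (A \ G).filter (t < ·)).card + (M.picks q G A).card := by
  have hpicks : ∀ z ∈ M.picks q G A, z ∈ A ∧ z ∉ G := fun z hz =>
    Finset.mem_sdiff.1 (picks_subset hz)
  have hunion : M.firstPass q G A ∪ A.filter (t < ·) =
      (A ∩ G ∪ (A \ G).filter (t < ·)) ∪ M.picks q G A := by
    ext z
    have := hpicks z
    simp only [firstPass, Finset.mem_union, Finset.mem_inter, Finset.mem_filter,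
      Finset.mem_sdiff]
    tauto
  have hinter : (A ∩ G ∪ (A \ G).filter (t < ·)) ∩ M.picks q G A =
      (M.picks q G A).filter (t < ·) := by
    ext z
    have := hpicks z
    simp only [Finset.mem_union, Finset.mem_inter, Finset.mem_filter, Finset.mem_sdiff]
    tauto
  rw [hunion, ← hinter, Finset.card_union_add_card_inter]

lemma mem_greedyChoice_of_subset (hG : G.card ≤ q) (hAD : A ⊆ D)
    (hxD : x ∈ M.greedyChoice q G D) (hxA : x ∈ A) : x ∈ M.greedyChoice q G A := by
  by_cases hxG : x ∈ G
  · exact inter_subset_greedyChoice (Finset.mem_inter.2 ⟨hxA, hxG⟩)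
  by_cases hxPA : x ∈ M.firstPass q G A
  · exact firstPass_subset_greedyChoice hxPA
  by_cases hxPD : x ∈ M.picks q G D
  · exact absurd (Finset.mem_union_right _ (mem_picks_of_subset hG hAD hxPD hxA)) hxPA
  have hxD' : x ∈ D \ M.firstPass q G D := Finset.mem_sdiff.2 ⟨hAD hxA, fun h =>
    (Finset.mem_union.1 h).elim (fun h => hxG (Finset.mem_inter.1 h).2) hxPD⟩
  rw [mem_greedyChoice_iff hG hxD'] at hxD
  rw [mem_greedyChoice_iff hG (Finset.mem_sdiff.2 ⟨hxA, hxPA⟩)]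
  -- With `U` the guaranteed contracts and those above `x`: the first pass on `D` stays below its
  -- rank cap, so the count for `D` is `|U_D| - r U_D + r D`, which bounds the count for `A`.
  have hU : A ∩ G ∪ (A \ G).filter (x < ·) ⊆ D ∩ G ∪ (D \ G).filter (x < ·) :=
    Finset.union_subset_union (Finset.inter_subset_inter_right hAD)
      (Finset.filter_subset_filter _ (Finset.sdiff_subset_sdiff hAD le_rfl))
  have := card_firstPass_union_filter (M := M) (q := q) (G := G) (A := A) x
  have := card_firstPass_union_filter (M := M) (q := q) (G := G) (A := D) x
  have := rank_add_card_picks (M := M) (q := q) (G := G) (A := A)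
  have := rank_add_card_picks (M := M) (q := q) (G := G) (A := D)
  have := rank_add_card_filter_picks (M := M) (q := q) (G := G) (A := A) x
  have := rank_add_card_filter_picks (M := M) (q := q) (G := G) (A := D) x
  have := card_firstPass (M := M) (q := q) (G := G) (A := D)
  have := Finset.card_le_card (Finset.subset_union_left :
    M.firstPass q G D ⊆ M.firstPass q G D ∪ D.filter (x < ·))
  have := Finset.card_le_card (Finset.inter_subset_right : D ∩ G ⊆ G)
  have := card_add_rank_le_of_subset (M := M) hU
  have := rank_mono (M := M) (Finset.union_subset Finset.inter_subset_left
    ((Finset.filter_subset _ _).trans Finset.sdiff_subset) : A ∩ G ∪ (A \ G).filter (x < ·) ⊆ A)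
  have := rank_mono (M := M) (Finset.union_subset Finset.inter_subset_left
    ((Finset.filter_subset _ _).trans Finset.sdiff_subset) : D ∩ G ∪ (D \ G).filter (x < ·) ⊆ D)
  have := rank_mono (M := M) hAD
  unfold capRank at *
  omega

end GreedyChoice

lemma IsReserveChoice.inter_subset_of_subset {α : Type*} [LinearOrder α] {M : FinMatroid α}
    {q : ℕ} {G A D S T : Finset α} (hG : G.card ≤ q) (hS : M.IsReserveChoice q G A S)
    (hT : M.IsReserveChoice q G D T) (hAD : A ⊆ D) : T ∩ A ⊆ S := by
  rw [hS.unique (isReserveChoice_greedyChoice hG A), hT.unique (isReserveChoice_greedyChoice hG D)]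
  exact fun x hx => mem_greedyChoice_of_subset hG hAD (Finset.mem_inter.1 hx).1
    (Finset.mem_inter.1 hx).2

end FinMatroid

theorem guaranteedEnrollment_pathIndependent_sizeMonotone_general
    {α : Type*} [LinearOrder α]
    (M : FinMatroid α) (q : ℕ) (G : Finset α) (hG : G.card ≤ q)
    (C : Finset α → Finset α) (hC : ∀ A : Finset α, C A ⊆ A)
    -- (i) guaranteed enrollment for returning students
    (hGE : ∀ A : Finset α, A ∩ G ⊆ C A)
    -- (ii) maximal utilization of reservations
    (hMU : ∀ A : Finset α, ∀ x ∈ A \ C A,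
      ((C A).card < q → M.rank (insert x (C A)) = M.rank (C A)) ∧
      ((C A).card = q → ∀ y ∈ C A \ G,
        M.rank (insert x ((C A).erase y)) ≤ M.rank (C A)))
    -- (iii) no justified envy under reserves
    (hNJE : ∀ A : Finset α, ∀ x ∈ C A \ G, ∀ y ∈ A \ C A,
      y > x → M.rank (insert y ((C A).erase x)) < M.rank (C A))
    -- (iv) non-wastefulness
    (hNW : ∀ A : Finset α, (C A).card = min A.card q) :
    (∀ A B : Finset α, C (A ∪ B) = C (C A ∪ B)) ∧
    (∀ A B : Finset α, A ⊆ B → (C A).card ≤ (C B).card) := by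
  have hchoice : ∀ A, M.IsReserveChoice q G A (C A) := fun A =>
    ⟨hC A, hGE A, hNW A, hMU A, hNJE A⟩
  refine ⟨fun A B => ?_, fun A B hAB => ?_⟩
  · have hsub : C (A ∪ B) ⊆ C A ∪ B := fun x hx => Finset.mem_union.2 <|
      (Finset.mem_union.1 (hC _ hx)).imp (fun hxA => (hchoice A).inter_subset_of_subset hG
        (hchoice (A ∪ B)) Finset.subset_union_left (Finset.mem_inter.2 ⟨hx, hxA⟩)) id
    have hmid : C A ∪ B ⊆ A ∪ B := Finset.union_subset_union (hC A) subset_rfl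
    exact ((hchoice (C A ∪ B)).unique ((hchoice (A ∪ B)).of_subset hsub hmid)).symm
  · rw [hNW A, hNW B]
    exact min_le_min_right q (Finset.card_le_card hAB)

/-- Every choice rule satisfying guaranteed enrollment, maximal utilization
of reservations, no justified envy under reserves, and non-wastefulness
satisfies path independence and size monotonicity. -/
theorem guaranteedEnrollment_pathIndependent_sizeMonotone
    {α : Type*} [Fintype α] [LinearOrder α]
    (M : FinMatroid α) (q : ℕ) (G : Finset α) (hG : G.card ≤ q)
    (C : Finset α → Finset α) (hC : ∀ A : Finset α, C A ⊆ A)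
    -- (i) guaranteed enrollment for returning students
    (hGE : ∀ A : Finset α, A ∩ G ⊆ C A)
    -- (ii) maximal utilization of reservations
    (hMU : ∀ A : Finset α, ∀ x ∈ A \ C A,
      ((C A).card < q → M.rank (insert x (C A)) = M.rank (C A)) ∧
      ((C A).card = q → ∀ y ∈ C A \ G,
        M.rank (insert x ((C A).erase y)) ≤ M.rank (C A)))
    -- (iii) no justified envy under reserves
    (hNJE : ∀ A : Finset α, ∀ x ∈ C A \ G, ∀ y ∈ A \ C A,
      y > x → M.rank (insert y ((C A).erase x)) < M.rank (C A))
    -- (iv) non-wastefulness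
    (hNW : ∀ A : Finset α, (C A).card = min A.card q) :
    (∀ A B : Finset α, C (A ∪ B) = C (C A ∪ B)) ∧
    (∀ A B : Finset α, A ⊆ B → (C A).card ≤ (C B).card) :=
  guaranteedEnrollment_pathIndependent_sizeMonotone_general M q G hG C hC hGE hMU hNJE hNW
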